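/- arXiv:2107.11533 — 2 statements merged into one kernel-verified Lean document; each statement's English description precedes it below -/
import Mathlib

section
/- The bias of the IPS estimator equals the negative expected reward mass on unsupported actions: E_S[R̂_IPS(π)] − R(π) = E_x[−∑_{a ∈ U(x,μ)} π(a|x) δ(x,a)], where U(x,μ) = {a : μ(a|x) = 0} and δ(x,a) = E[r | x,a]. -/
open MeasureTheory Finset
open scoped Classical

/-- Because `x / 0 = 0`, the terms with `m i = 0` vanish instead of contributing `p i * d i`. -/
theorem sum_mul_div_mul_eq_sub_sum_filter {ι K : Type*} [Field K] (s : Finset ι)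
    (m p d : ι → K) [DecidablePred fun i => m i = 0] :
    ∑ i ∈ s, m i * (p i / m i * d i) = ∑ i ∈ s, p i * d i - ∑ i ∈ s with m i = 0, p i * d i := by
  calc ∑ i ∈ s, m i * (p i / m i * d i)
      = ∑ i ∈ s with ¬m i = 0, p i * d i := by
        rw [sum_filter]
        refine sum_congr rfl fun i _ => ?_
        split_ifs with hm
        · simp [hm]
        · field_simp
    _ = ∑ i ∈ s, p i * d i - ∑ i ∈ s with m i = 0, p i * d i := by
        rw [eq_sub_iff_add_eq, sum_filter_not_add_sum_filter]

theorem stmt0_general {X : Type*} [MeasurableSpace X] {A : Type*} [Fintype A]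
    (Px : Measure X)
    (μ π : X → A → ℝ) (δ : X → A → ℝ)
    (h1 : Integrable (fun x => ∑ a, μ x a * (π x a / μ x a * δ x a)) Px)
    (h2 : Integrable (fun x => ∑ a, π x a * δ x a) Px) :
    (∫ x, ∑ a, μ x a * (π x a / μ x a * δ x a) ∂Px) - (∫ x, ∑ a, π x a * δ x a ∂Px)
      = ∫ x, -∑ a ∈ univ.filter (fun a => μ x a = 0), π x a * δ x a ∂Px := by
  rw [← integral_sub h1 h2]
  congr 1 with x
  rw [sum_mul_div_mul_eq_sub_sum_filter]
  ring

/-- Bias of IPS under deficient support: the expectation of the IPS estimator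
(`E_S[R̂_IPS(π)] = E_x ∑_a μ(a|x)·(π(a|x)/μ(a|x))·δ(x,a)`, with the convention that the
ratio is `0` when `μ(a|x) = 0`) minus the policy value `R(π) = E_x ∑_a π(a|x) δ(x,a)`
equals `E_x[−∑_{a ∈ U(x,μ)} π(a|x) δ(x,a)]`, where `U(x,μ) = {a : μ(a|x) = 0}`. -/
theorem stmt0 {X : Type*} [MeasurableSpace X] {A : Type*} [Fintype A]
    (Px : Measure X) [IsProbabilityMeasure Px]
    (μ π : X → A → ℝ) (δ : X → A → ℝ)
    (hμ : ∀ x a, 0 ≤ μ x a) (hπ : ∀ x a, 0 ≤ π x a)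
    (h1 : Integrable (fun x => ∑ a, μ x a * (π x a / μ x a * δ x a)) Px)
    (h2 : Integrable (fun x => ∑ a, π x a * δ x a) Px) :
    (∫ x, ∑ a, μ x a * (π x a / μ x a * δ x a) ∂Px) - (∫ x, ∑ a, π x a * δ x a ∂Px)
      = ∫ x, -∑ a ∈ univ.filter (fun a => μ x a = 0), π x a * δ x a ∂Px :=
  stmt0_general Px μ π δ h1 h2
end

section
/- For a sequence x_1, x_2, ... in R^d with ‖x_t‖ ≤ S for all t, and V_t = V + ∑_{i=1}^t x_i x_iᵀ for a positive definite matrix V, one has ∑_{i=1}^t min(‖x_i‖²_{V_{i-1}^{-1}}, 1) ≤ 2 log(det(V_t)/det(V)) ≤ 2d log((trace(V) + t S²)/d) − 2 log(det(V)). -/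
/-!
Each rank-one update multiplies the determinant by `1 + ‖xᵢ‖²_{V_{i-1}⁻¹}` (matrix determinant
lemma), and `min u 1 ≤ 2 log (1 + u)`, so the sum telescopes into `2 log (det V_t / det V)`.
For the second inequality, AM–GM on the eigenvalues bounds `log det V_t` by
`d log (trace V_t / d)`, and `trace V_t ≤ trace V + t S²`.
-/

open Matrix Finset

namespace Matrix

variable {n : Type*} [Fintype n] [DecidableEq n]

theorem det_add_vecMulVec {R : Type*} [CommRing R] {A : Matrix n n R} (hA : IsUnit A.det)
    (u v : n → R) : (A + vecMulVec u v).det = A.det * (1 + v ⬝ᵥ A⁻¹ *ᵥ u) := by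
  rw [vecMulVec_eq Unit, det_add_replicateCol_mul_replicateRow hA, det_unique (n := Unit),
    ← replicateRow_vecMul, add_apply, one_apply_eq, replicateRow_mul_replicateCol_apply,
    dotProduct_mulVec]

theorem PosDef.log_det_le_card_mul_log_of_trace_le {A : Matrix n n ℝ} (hA : A.PosDef) {T : ℝ}
    (hT : A.trace ≤ T) : Real.log A.det ≤ Fintype.card n * Real.log (T / Fintype.card n) := by
  rcases isEmpty_or_nonempty n with hn | hn
  · simp
  set d : ℝ := (Fintype.card n : ℝ) with hd_def
  have hd : 0 < d := Nat.cast_pos.mpr Fintype.card_pos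
  have hm : 0 < A.trace / d := div_pos hA.trace_pos hd
  have hev := hA.eigenvalues_pos
  -- tangent line of `log` at the mean eigenvalue
  have tangent : ∀ i, Real.log (hA.isHermitian.eigenvalues i)
      ≤ Real.log (A.trace / d) + hA.isHermitian.eigenvalues i / (A.trace / d) - 1 := by
    intro i
    have := Real.log_le_sub_one_of_pos (div_pos (hev i) hm)
    rw [Real.log_div (hev i).ne' hm.ne'] at this
    linarith
  calc Real.log A.det = ∑ i, Real.log (hA.isHermitian.eigenvalues i) := by
        rw [hA.isHermitian.det_eq_prod_eigenvalues, ← RCLike.ofReal_prod]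
        exact Real.log_prod fun i _ => (hev i).ne'
    _ ≤ ∑ i, (Real.log (A.trace / d) + hA.isHermitian.eigenvalues i / (A.trace / d) - 1) :=
        sum_le_sum fun i _ => tangent i
    _ = d * Real.log (A.trace / d) := by
        have htr : A.trace = ∑ i, hA.isHermitian.eigenvalues i := by
          simpa using hA.isHermitian.trace_eq_sum_eigenvalues
        rw [sum_sub_distrib, sum_add_distrib, ← sum_div, ← htr, div_div_cancel₀ hA.trace_pos.ne']
        simp only [sum_const, card_univ, nsmul_eq_mul, mul_one, ← hd_def]
        ring
    _ ≤ d * Real.log (T / d) := by gcongr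

end Matrix

lemma min_le_two_mul_log_one_add {u : ℝ} (hu : 0 ≤ u) : min u 1 ≤ 2 * Real.log (1 + u) := by
  set m := min u 1
  have hm₀ : 0 ≤ m := le_min hu zero_le_one
  have hm₁ : m ≤ 1 := min_le_right u 1
  calc m ≤ 2 * (2 * m / (m + 2)) := by
        rw [mul_div_assoc', le_div_iff₀ (by linarith)]
        nlinarith
    _ ≤ 2 * Real.log (1 + m) := by gcongr; exact Real.le_log_one_add_of_nonneg hm₀
    _ ≤ 2 * Real.log (1 + u) := by gcongr; exact min_le_left u 1

section DesignMatrix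

variable {n : Type*}

/-- The paper's `V_t`, with the sequence indexed from `0`: `x j` here is `x_{j+1}` there. -/
def designMatrix (V : Matrix n n ℝ) (x : ℕ → n → ℝ) (t : ℕ) : Matrix n n ℝ :=
  V + ∑ j ∈ range t, vecMulVec (x j) (x j)

variable {V : Matrix n n ℝ} (x : ℕ → n → ℝ)

theorem designMatrix_succ (t : ℕ) :
    designMatrix V x (t + 1) = designMatrix V x t + vecMulVec (x t) (x t) := by
  simp only [designMatrix, sum_range_succ, add_assoc]

theorem Matrix.PosDef.designMatrix [Fintype n] (hV : V.PosDef) (t : ℕ) :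
    (designMatrix V x t).PosDef :=
  hV.add_posSemidef <| posSemidef_sum _ fun j _ => by
    simpa using posSemidef_vecMulVec_self_star (x j)

theorem det_designMatrix_succ [Fintype n] [DecidableEq n] (hV : V.PosDef) (t : ℕ) :
    (designMatrix V x (t + 1)).det
      = (designMatrix V x t).det * (1 + x t ⬝ᵥ (designMatrix V x t)⁻¹ *ᵥ x t) := by
  rw [designMatrix_succ, det_add_vecMulVec (hV.designMatrix x t).det_pos.ne'.isUnit]

theorem sum_min_le_two_mul_log_det_designMatrix_div [Fintype n] [DecidableEq n] (hV : V.PosDef)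
    (t : ℕ) :
    ∑ i ∈ range t, min (x i ⬝ᵥ (designMatrix V x i)⁻¹ *ᵥ x i) 1
      ≤ 2 * Real.log ((designMatrix V x t).det / V.det) := by
  induction t with
  | zero => simp [designMatrix, div_self hV.det_pos.ne']
  | succ t ih =>
    have hu : 0 ≤ x t ⬝ᵥ (designMatrix V x t)⁻¹ *ᵥ x t := by
      simpa using (hV.designMatrix x t).posSemidef.inv.dotProduct_mulVec_nonneg (x t)
    have hlog : Real.log ((designMatrix V x (t + 1)).det / V.det)
        = Real.log ((designMatrix V x t).det / V.det)
          + Real.log (1 + x t ⬝ᵥ (designMatrix V x t)⁻¹ *ᵥ x t) := by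
      rw [det_designMatrix_succ x hV, mul_div_right_comm,
        Real.log_mul (div_pos (hV.designMatrix x t).det_pos hV.det_pos).ne' (by positivity)]
    rw [sum_range_succ, hlog]
    linarith [min_le_two_mul_log_one_add hu]

theorem trace_designMatrix_le [Fintype n] {S : ℝ} (hx : ∀ i, x i ⬝ᵥ x i ≤ S ^ 2) (t : ℕ) :
    (designMatrix V x t).trace ≤ V.trace + t * S ^ 2 := by
  rw [designMatrix, trace_add, trace_sum]
  grw [sum_le_sum fun j _ => (trace_vecMulVec (x j) (x j)).trans_le (hx j)]
  simp

end DesignMatrix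

/-- Elliptical potential lemma: for `‖x_i‖ ≤ S` and `V_t = V + ∑_{i=1}^t x_i x_iᵀ` with
`V` positive definite,
`∑_{i=1}^t min(‖x_i‖²_{V_{i-1}⁻¹}, 1) ≤ 2 log(det V_t / det V)
  ≤ 2d log((trace V + t S²)/d) − 2 log det V`. -/
theorem stmt2 {d : ℕ} (V : Matrix (Fin d) (Fin d) ℝ) (hV : V.PosDef)
    (x : ℕ → Fin d → ℝ) (S : ℝ) (hx : ∀ i, Real.sqrt (x i ⬝ᵥ x i) ≤ S) (t : ℕ) :
    (∑ i ∈ range t,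
        min (x i ⬝ᵥ ((V + ∑ j ∈ range i, vecMulVec (x j) (x j))⁻¹).mulVec (x i)) 1)
      ≤ 2 * Real.log ((V + ∑ j ∈ range t, vecMulVec (x j) (x j)).det / V.det) ∧
    2 * Real.log ((V + ∑ j ∈ range t, vecMulVec (x j) (x j)).det / V.det)
      ≤ 2 * d * Real.log ((V.trace + t * S ^ 2) / d) - 2 * Real.log V.det := by
  refine ⟨sum_min_le_two_mul_log_det_designMatrix_div x hV t, ?_⟩
  have hlog := (hV.designMatrix x t).log_det_le_card_mul_log_of_trace_le
    (trace_designMatrix_le x (fun i => Real.sqrt_le_iff.mp (hx i) |>.2) t)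
  rw [Fintype.card_fin] at hlog
  change 2 * Real.log ((designMatrix V x t).det / V.det) ≤ _
  rw [Real.log_div (hV.designMatrix x t).det_pos.ne' hV.det_pos.ne']
  linarith
end
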